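/- arXiv:2012.04541 — 2 statements merged into one kernel-verified Lean document; each statement's English description precedes it below -/
import Mathlib

section
/- Let (Z_j)_{j≥0} be an i.i.d. sequence of ℝ^d-valued random vectors, and let P ∈ ℝ^{d×d} be invertible with ρ(P) < 1. If P^j Z_j → 0 almost surely as j → ∞, then E[log⁺‖Z₀‖] < ∞. -/
open MeasureTheory ProbabilityTheory Matrix Filter

/-- The spectral radius of a real `d × d` matrix: the supremum of the moduli of its complex
eigenvalues. -/
noncomputable def specRad {d : ℕ} (P : Matrix (Fin d) (Fin d) ℝ) : ℝ :=
  sSup ((fun z : ℂ => ‖z‖) '' spectrum ℂ (P.map (algebraMap ℝ ℂ)))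

/-- A real `d × d` matrix acting on Euclidean space. -/
noncomputable def mApp {d : ℕ} (P : Matrix (Fin d) (Fin d) ℝ)
    (x : EuclideanSpace ℝ (Fin d)) : EuclideanSpace ℝ (Fin d) :=
  Matrix.toEuclideanCLM (𝕜 := ℝ) P x

/-- `log⁺ x = max (log x) 0`. -/
noncomputable def logPlus (x : ℝ) : ℝ := max (Real.log x) 0

/-!
Since `P` is invertible, `‖x‖ ≤ R ^ j * ‖P ^ j x‖` with `R = max ‖P⁻¹‖ 1`. Hence `P ^ j Z_j → 0`
forces `log⁺ ‖Z_j‖ ≤ j log R < c (j + 1)` eventually, for `c = log R + 1`. The events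
`{c (j + 1) ≤ log⁺ ‖Z_j‖}` are independent and almost surely occur only finitely often, so by
the second Borel–Cantelli lemma their probabilities are summable. By identical distribution
these are the tail probabilities `P(log⁺ ‖Z_0‖ ≥ c (j + 1))`, and their summability is the
finiteness of `E log⁺ ‖Z_0‖`.
-/

lemma measurable_logPlus : Measurable logPlus :=
  Real.measurable_log.max measurable_const

lemma norm_le_pow_mul_norm_iterate {E : Type*} [SeminormedAddGroup E] {f : E → E} {R : ℝ}
    (hR : 0 ≤ R) (hf : ∀ y, ‖y‖ ≤ R * ‖f y‖) (j : ℕ) (x : E) :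
    ‖x‖ ≤ R ^ j * ‖f^[j] x‖ := by
  induction j with
  | zero => simp
  | succ j ih =>
    calc ‖x‖ ≤ R ^ j * ‖f^[j] x‖ := ih
      _ ≤ R ^ j * (R * ‖f (f^[j] x)‖) := by gcongr; exact hf _
      _ = R ^ (j + 1) * ‖f^[j + 1] x‖ := by rw [Function.iterate_succ_apply', pow_succ, mul_assoc]

lemma mApp_pow {d : ℕ} (P : Matrix (Fin d) (Fin d) ℝ) (j : ℕ) :
    mApp (P ^ j) = (mApp P)^[j] := by
  rw [show mApp (P ^ j) = ⇑(toEuclideanCLM (𝕜 := ℝ) (P ^ j)) from rfl, map_pow,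
    FunLike.coe_pow_eq_iterate]
  rfl

lemma exists_norm_le_mul_norm_mApp {d : ℕ} {P : Matrix (Fin d) (Fin d) ℝ} (hP : IsUnit P) :
    ∃ R, 1 ≤ R ∧ ∀ x, ‖x‖ ≤ R * ‖mApp P x‖ := by
  refine ⟨max ‖toEuclideanCLM (𝕜 := ℝ) P⁻¹‖ 1, le_max_right _ _, fun x => ?_⟩
  have hinv : toEuclideanCLM (𝕜 := ℝ) P⁻¹ (mApp P x) = x := by
    change (toEuclideanCLM (𝕜 := ℝ) P⁻¹ * toEuclideanCLM (𝕜 := ℝ) P) x = x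
    rw [← map_mul, nonsing_inv_mul P ((isUnit_iff_isUnit_det P).mp hP), map_one]
    rfl
  calc ‖x‖ = ‖toEuclideanCLM (𝕜 := ℝ) P⁻¹ (mApp P x)‖ := by rw [hinv]
    _ ≤ ‖toEuclideanCLM (𝕜 := ℝ) P⁻¹‖ * ‖mApp P x‖ := ContinuousLinearMap.le_opNorm _ _
    _ ≤ _ := by gcongr; exact le_max_left _ _

lemma logPlus_le_mul_log_of_le_pow {y R : ℝ} (hy : 0 ≤ y) (hR : 1 ≤ R) {j : ℕ}
    (hyR : y ≤ R ^ j) : logPlus y ≤ j * Real.log R := by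
  have hlogR : 0 ≤ j * Real.log R := by have := Real.log_nonneg hR; positivity
  refine max_le ?_ hlogR
  rcases hy.eq_or_lt with rfl | hy
  · simpa using hlogR
  · calc Real.log y ≤ Real.log (R ^ j) := Real.log_le_log hy hyR
      _ = j * Real.log R := Real.log_pow R j

lemma exists_eventually_logPlus_norm_lt_of_tendsto {d : ℕ} {P : Matrix (Fin d) (Fin d) ℝ}
    (hP : IsUnit P) : ∃ c : ℝ, 0 < c ∧ ∀ z : ℕ → EuclideanSpace ℝ (Fin d),
      Tendsto (fun j => mApp (P ^ j) (z j)) atTop (nhds 0) →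
        ∀ᶠ j : ℕ in atTop, logPlus ‖z j‖ < c * (j + 1) := by
  obtain ⟨R, hR1, hR⟩ := exists_norm_le_mul_norm_mApp hP
  have hlogR := Real.log_nonneg hR1
  refine ⟨Real.log R + 1, by positivity, fun z hz => ?_⟩
  filter_upwards [hz.norm.eventually (gt_mem_nhds (norm_zero.trans_lt one_pos))] with j hj
  have hzR : ‖z j‖ ≤ R ^ j :=
    calc ‖z j‖ ≤ R ^ j * ‖mApp (P ^ j) (z j)‖ := by
          rw [mApp_pow]; exact norm_le_pow_mul_norm_iterate (by linarith) hR j _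
      _ ≤ R ^ j := mul_le_of_le_one_right (by positivity) hj.le
  calc logPlus ‖z j‖ ≤ j * Real.log R := logPlus_le_mul_log_of_le_pow (norm_nonneg _) hR1 hzR
    _ < (Real.log R + 1) * (j + 1) := by nlinarith [(j.cast_nonneg : (0 : ℝ) ≤ j)]

lemma ProbabilityTheory.iIndepFun.iIndepSet_preimage {Ω E : Type*} [MeasurableSpace Ω]
    [MeasurableSpace E] {μ : Measure Ω} {Z : ℕ → Ω → E} (h : iIndepFun Z μ)
    (hZ : ∀ j, Measurable (Z j))
    {B : ℕ → Set E} (hB : ∀ j, MeasurableSet (B j)) :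
    iIndepSet (fun j => Z j ⁻¹' B j) μ :=
  (iIndepSet_iff_meas_biInter fun j => hZ j (hB j)).2 fun S =>
    h.measure_inter_preimage_eq_mul S fun j _ => hB j

lemma ProbabilityTheory.iIndepFun.tsum_measure_preimage_ne_top {Ω E : Type*} [MeasurableSpace Ω]
    [MeasurableSpace E] {μ : Measure Ω} [IsProbabilityMeasure μ] {Z : ℕ → Ω → E}
    (h : iIndepFun Z μ) (hZ : ∀ j, Measurable (Z j)) {B : ℕ → Set E}
    (hB : ∀ j, MeasurableSet (B j)) (hfin : ∀ᵐ ω ∂μ, ∀ᶠ j in atTop, Z j ω ∉ B j) :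
    ∑' j, μ (Z j ⁻¹' B j) ≠ ⊤ := by
  intro htop
  have hlimsup := measure_limsup_eq_one (fun j => hZ j (hB j)) (h.iIndepSet_preimage hZ hB) htop
  have hnull : μ (limsup (fun j => Z j ⁻¹' B j) atTop) = 0 := by
    rw [measure_eq_zero_iff_ae_notMem]
    filter_upwards [hfin] with ω hω
    rwa [mem_limsup_iff_frequently_mem, not_frequently]
  simp [hnull] at hlimsup

lemma ofReal_le_mul_one_add_tsum {c : ℝ} (hc : 0 < c) (y : ℝ) :
    ENNReal.ofReal y ≤
      ENNReal.ofReal c * (1 + ∑' j : ℕ, if c * (j + 1) ≤ y then 1 else 0) := by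
  set k := ⌊y / c⌋₊
  have hy : y ≤ c * (1 + k) := by
    have := (div_lt_iff₀ hc).mp (Nat.lt_floor_add_one (y / c))
    linarith
  have hk : (k : ENNReal) ≤ ∑' j : ℕ, if c * (j + 1) ≤ y then 1 else 0 := by
    calc (k : ENNReal) = ∑ j ∈ Finset.range k, if c * (j + 1) ≤ y then 1 else 0 := by
          rw [Finset.sum_congr rfl fun j hj => if_pos ?_]
          · simp
          · have hjy := (Nat.le_floor_iff' j.succ_ne_zero).mp (Finset.mem_range.mp hj)
            rw [le_div_iff₀ hc] at hjy
            push_cast at hjy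
            linarith
      _ ≤ _ := ENNReal.sum_le_tsum _
  calc ENNReal.ofReal y ≤ ENNReal.ofReal (c * (1 + k)) := ENNReal.ofReal_le_ofReal hy
    _ = ENNReal.ofReal c * (1 + k) := by
        rw [ENNReal.ofReal_mul hc.le, ENNReal.ofReal_add zero_le_one k.cast_nonneg]; simp
    _ ≤ _ := by gcongr

lemma lintegral_ofReal_le_mul_add_tsum {Ω : Type*} [MeasurableSpace Ω] (μ : Measure Ω)
    {X : Ω → ℝ} (hX : Measurable X) {c : ℝ} (hc : 0 < c) :
    ∫⁻ ω, ENNReal.ofReal (X ω) ∂μ ≤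
      ENNReal.ofReal c * (μ Set.univ + ∑' j : ℕ, μ {ω | c * (j + 1) ≤ X ω}) := by
  have hS : ∀ j : ℕ, MeasurableSet {ω | c * (j + 1) ≤ X ω} :=
    fun j => measurableSet_le measurable_const hX
  calc ∫⁻ ω, ENNReal.ofReal (X ω) ∂μ
      ≤ ∫⁻ ω, ENNReal.ofReal c *
          (1 + ∑' j : ℕ, {ω | c * (j + 1) ≤ X ω}.indicator 1 ω) ∂μ := by
        refine lintegral_mono fun ω => (ofReal_le_mul_one_add_tsum hc (X ω)).trans_eq ?_
        simp [Set.indicator_apply]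
    _ = _ := by
        rw [lintegral_const_mul' _ _ ENNReal.ofReal_ne_top, lintegral_add_left measurable_const,
          lintegral_tsum fun j => (measurable_one.indicator (hS j)).aemeasurable]
        simp [lintegral_indicator_one (hS _)]

theorem finite_log_moment_of_tendsto_zero_general {d : ℕ} {Ω : Type*} [MeasurableSpace Ω]
    (μ : Measure Ω) [IsProbabilityMeasure μ]
    (Z : ℕ → Ω → EuclideanSpace ℝ (Fin d)) (hmeas : ∀ j, Measurable (Z j))
    (hindep : iIndepFun Z μ)
    (hident : ∀ j, IdentDistrib (Z j) (Z 0) μ μ)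
    (P : Matrix (Fin d) (Fin d) ℝ) (hPinv : IsUnit P)
    (htends : ∀ᵐ ω ∂μ,
      Filter.Tendsto (fun j : ℕ => mApp (P ^ j) (Z j ω)) atTop (nhds 0)) :
    ∫⁻ ω, ENNReal.ofReal (logPlus ‖Z 0 ω‖) ∂μ < ⊤ := by
  obtain ⟨c, hc, hgrowth⟩ := exists_eventually_logPlus_norm_lt_of_tendsto hPinv
  have hlogPlus : Measurable fun x : EuclideanSpace ℝ (Fin d) => logPlus ‖x‖ :=
    measurable_logPlus.comp measurable_norm
  set B : ℕ → Set (EuclideanSpace ℝ (Fin d)) := fun j => {x | c * (j + 1) ≤ logPlus ‖x‖}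
  have hB : ∀ j, MeasurableSet (B j) := fun j => measurableSet_le measurable_const hlogPlus
  have hsum : ∑' j, μ (Z j ⁻¹' B j) ≠ ⊤ := by
    refine hindep.tsum_measure_preimage_ne_top hmeas hB ?_
    filter_upwards [htends] with ω hω
    filter_upwards [hgrowth _ hω] with j hj
    exact not_le.mpr hj
  have hident_sum : ∑' j, μ (Z j ⁻¹' B j) = ∑' j, μ (Z 0 ⁻¹' B j) :=
    tsum_congr fun j => (hident j).measure_mem_eq (hB j)
  calc ∫⁻ ω, ENNReal.ofReal (logPlus ‖Z 0 ω‖) ∂μ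
      ≤ ENNReal.ofReal c * (μ Set.univ + ∑' j, μ (Z 0 ⁻¹' B j)) :=
        lintegral_ofReal_le_mul_add_tsum μ (hlogPlus.comp (hmeas 0)) hc
    _ < ⊤ := by
        rw [← hident_sum]
        exact ENNReal.mul_lt_top ENNReal.ofReal_lt_top
          (ENNReal.add_lt_top.mpr ⟨measure_lt_top μ _, hsum.lt_top⟩)

theorem finite_log_moment_of_tendsto_zero {d : ℕ} {Ω : Type*} [MeasurableSpace Ω]
    (μ : Measure Ω) [IsProbabilityMeasure μ]
    (Z : ℕ → Ω → EuclideanSpace ℝ (Fin d)) (hmeas : ∀ j, Measurable (Z j))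
    (hindep : iIndepFun Z μ)
    (hident : ∀ j, IdentDistrib (Z j) (Z 0) μ μ)
    (P : Matrix (Fin d) (Fin d) ℝ) (hPinv : IsUnit P) (hP : specRad P < 1)
    (htends : ∀ᵐ ω ∂μ,
      Filter.Tendsto (fun j : ℕ => mApp (P ^ j) (Z j ω)) atTop (nhds 0)) :
    ∫⁻ ω, ENNReal.ofReal (logPlus ‖Z 0 ω‖) ∂μ < ⊤ :=
  finite_log_moment_of_tendsto_zero_general μ Z hmeas hindep hident P hPinv htends
end

section
/- Let (Z_j)_{j≥0} be an i.i.d. sequence of ℝ^d-valued random vectors and P ∈ ℝ^{d×d} an invertible matrix with ρ(P) < 1. Then the following are equivalent: (i) E[log⁺‖Z₀‖] < ∞; (ii) ∑_{j=0}^∞ ‖P^j Z_j‖ < ∞ a.s.; (iii) ∑_{j=0}^∞ P^j Z_j converges a.s. in ℝ^d; (iv) P^j Z_j → 0 a.s. as j → ∞. -/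
open MeasureTheory ProbabilityTheory Matrix Filter

open scoped ENNReal NNReal
open Set

theorem norm_le_pow_mul_norm_pow_apply {𝕜 E : Type*} [NontriviallyNormedField 𝕜]
    [NormedAddCommGroup E] [NormedSpace 𝕜 E] {S T : E →L[𝕜] E}
    (hTS : Function.LeftInverse T S) {C : ℝ} (hC : ‖T‖ ≤ C) (n : ℕ) (x : E) :
    ‖x‖ ≤ C ^ n * ‖(S ^ n) x‖ := by
  induction n generalizing x with
  | zero => simp
  | succ n ih =>
    have hC0 : 0 ≤ C := (norm_nonneg T).trans hC
    calc ‖x‖ = ‖T (S x)‖ := by rw [hTS x]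
      _ ≤ C * ‖S x‖ := (T.le_opNorm _).trans (by gcongr)
      _ ≤ C * (C ^ n * ‖(S ^ n) (S x)‖) := by gcongr; exact ih _
      _ = C ^ (n + 1) * ‖(S ^ (n + 1)) x‖ := by rw [pow_succ, pow_succ, mul_apply_eq_comp]; ring

theorem spectrum.eventually_norm_pow_le_of_spectralRadius_lt {A : Type*} [NormedRing A]
    [NormedAlgebra ℂ A] [CompleteSpace A] {a : A} {r : ℝ≥0} (h : spectralRadius ℂ a < r) :
    ∀ᶠ n : ℕ in atTop, ‖a ^ n‖ ≤ r ^ n := by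
  filter_upwards [(pow_nnnorm_pow_one_div_tendsto_nhds_spectralRadius a).eventually_lt_const h,
    eventually_gt_atTop 0] with n hn hn0
  rw [one_div, ENNReal.rpow_inv_lt_iff (by positivity), ENNReal.rpow_natCast, ← ENNReal.coe_pow,
    ENNReal.coe_lt_coe] at hn
  exact_mod_cast hn.le

theorem tendsto_zero_of_tendsto_sum_range {G : Type*} [AddCommGroup G] [TopologicalSpace G]
    [IsTopologicalAddGroup G] {f : ℕ → G} {L : G}
    (h : Tendsto (fun n => ∑ j ∈ Finset.range n, f j) atTop (nhds L)) :
    Tendsto f atTop (nhds 0) := by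
  simpa [Function.comp_def, Finset.sum_range_succ] using
    (h.comp (tendsto_add_atTop_nat 1)).sub h

section MatrixPowers

variable {d : ℕ}

theorem exists_one_lt_forall_norm_le_pow_mul_norm_mApp_pow {P : Matrix (Fin d) (Fin d) ℝ}
    (hP : IsUnit P) : ∃ b : ℝ, 1 < b ∧ ∀ (j : ℕ) x, ‖x‖ ≤ b ^ j * ‖mApp (P ^ j) x‖ := by
  set T := toEuclideanCLM (𝕜 := ℝ) P⁻¹
  refine ⟨‖T‖ + 2, by linarith [norm_nonneg T], fun j x => ?_⟩
  have hinv : Function.LeftInverse T (toEuclideanCLM (𝕜 := ℝ) P) := fun y => by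
    rw [← mul_apply_eq_comp, ← map_mul, nonsing_inv_mul _ ((isUnit_iff_isUnit_det P).1 hP),
      map_one, one_apply_eq_self]
  rw [mApp, map_pow]
  exact norm_le_pow_mul_norm_pow_apply hinv (le_add_of_nonneg_right zero_le_two) j x

theorem norm_mApp_le_norm_toEuclideanCLM_map_mul (M : Matrix (Fin d) (Fin d) ℝ)
    (x : EuclideanSpace ℝ (Fin d)) :
    ‖mApp M x‖ ≤ ‖toEuclideanCLM (𝕜 := ℂ) (M.map (algebraMap ℝ ℂ))‖ * ‖x‖ := by
  let ι : EuclideanSpace ℝ (Fin d) → EuclideanSpace ℂ (Fin d) := fun y =>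
    WithLp.toLp 2 fun i => (y i : ℂ)
  have hι : ∀ y, ‖ι y‖ = ‖y‖ := fun y => by simp [ι, EuclideanSpace.norm_eq]
  have hcomm : toEuclideanCLM (𝕜 := ℂ) (M.map (algebraMap ℝ ℂ)) (ι x) = ι (mApp M x) := by
    ext i
    simp [ι, mApp, mulVec, dotProduct]
  rw [← hι, ← hcomm, ← hι x]
  exact ContinuousLinearMap.le_opNorm _ _

theorem spectralRadius_toEuclideanCLM_map_le (P : Matrix (Fin d) (Fin d) ℝ) :
    spectralRadius ℂ (toEuclideanCLM (𝕜 := ℂ) (P.map (algebraMap ℝ ℂ)))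
      ≤ ENNReal.ofReal (specRad P) := by
  rw [spectralRadius, AlgEquiv.spectrum_eq]
  refine iSup₂_le fun z hz => ?_
  rw [← ENNReal.ofReal_coe_nnreal, coe_nnnorm]
  exact ENNReal.ofReal_le_ofReal (le_csSup ((finite_spectrum _).image _).bddAbove ⟨z, hz, rfl⟩)

theorem exists_lt_one_eventually_norm_mApp_pow_le {P : Matrix (Fin d) (Fin d) ℝ}
    (hP : specRad P < 1) :
    ∃ r : ℝ, 0 < r ∧ r < 1 ∧ ∀ᶠ j : ℕ in atTop, ∀ x, ‖mApp (P ^ j) x‖ ≤ r ^ j * ‖x‖ := by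
  obtain ⟨r, hPr, hr1⟩ := exists_between (max_lt hP zero_lt_one)
  have hr0 : 0 < r := (le_max_right _ _).trans_lt hPr
  lift r to ℝ≥0 using hr0.le
  refine ⟨r, hr0, hr1, ?_⟩
  have hρ : spectralRadius ℂ (toEuclideanCLM (𝕜 := ℂ) (P.map (algebraMap ℝ ℂ))) < r :=
    (spectralRadius_toEuclideanCLM_map_le P).trans_lt <| by
      rw [← ENNReal.ofReal_coe_nnreal]
      exact (ENNReal.ofReal_lt_ofReal_iff hr0).2 ((le_max_left _ _).trans_lt hPr)
  filter_upwards [spectrum.eventually_norm_pow_le_of_spectralRadius_lt hρ] with j hj x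
  calc ‖mApp (P ^ j) x‖ ≤ ‖toEuclideanCLM (𝕜 := ℂ) ((P ^ j).map (algebraMap ℝ ℂ))‖ * ‖x‖ :=
        norm_mApp_le_norm_toEuclideanCLM_map_mul _ _
    _ ≤ r ^ j * ‖x‖ := by rw [Matrix.map_pow, map_pow]; gcongr

end MatrixPowers

section TailSums

variable {Ω : Type*} [MeasurableSpace Ω] {μ : Measure Ω}

theorem tsum_measure_natCast_lt_eq_lintegral_ceil {X : Ω → ℝ} (hX : Measurable X) :
    ∑' n : ℕ, μ {ω | (n : ℝ) < X ω} = ∫⁻ ω, (⌈X ω⌉₊ : ℝ≥0∞) ∂μ := by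
  have hcount : ∀ ω, ∑' n : ℕ, {ω | (n : ℝ) < X ω}.indicator 1 ω = (⌈X ω⌉₊ : ℝ≥0∞) := by
    intro ω
    rw [tsum_eq_sum (s := Finset.range ⌈X ω⌉₊)]
    · simp [indicator_apply,
        Finset.filter_true_of_mem fun n hn => Nat.lt_ceil.1 (Finset.mem_range.1 hn)]
    · intro n hn
      simp_all [Nat.lt_ceil]
  have hmeas : ∀ n : ℕ, MeasurableSet {ω | (n : ℝ) < X ω} := fun n =>
    measurableSet_lt measurable_const hX
  simp_rw [← hcount, ← lintegral_indicator_one (hmeas _)]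
  exact (lintegral_tsum fun n => (measurable_one.indicator (hmeas n)).aemeasurable).symm

theorem lintegral_ofReal_lt_top_iff_tsum_measure_lt_top [IsFiniteMeasure μ] {X : Ω → ℝ}
    (hX : Measurable X) (hX0 : 0 ≤ X) :
    ∫⁻ ω, ENNReal.ofReal (X ω) ∂μ < ∞ ↔ ∑' n : ℕ, μ {ω | (n : ℝ) < X ω} < ∞ := by
  rw [tsum_measure_natCast_lt_eq_lintegral_ceil hX]
  constructor
  · intro h
    calc ∫⁻ ω, (⌈X ω⌉₊ : ℝ≥0∞) ∂μ ≤ ∫⁻ ω, ENNReal.ofReal (X ω) + 1 ∂μ := by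
          refine lintegral_mono fun ω => ?_
          rw [← ENNReal.ofReal_natCast, ← ENNReal.ofReal_one,
            ← ENNReal.ofReal_add (hX0 ω) zero_le_one]
          exact ENNReal.ofReal_le_ofReal (Nat.ceil_lt_add_one (hX0 ω)).le
      _ = ∫⁻ ω, ENNReal.ofReal (X ω) ∂μ + μ univ := by
          rw [lintegral_add_right _ measurable_const, lintegral_const, one_mul]
      _ < ∞ := ENNReal.add_lt_top.2 ⟨h, measure_lt_top μ univ⟩
  · refine fun h => (lintegral_mono fun ω => ?_).trans_lt h
    rw [← ENNReal.ofReal_natCast]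
    exact ENNReal.ofReal_le_ofReal (Nat.le_ceil _)

theorem pow_lt_iff_mul_log_lt_logPlus {b y : ℝ} (hb : 1 < b) (hy : 0 ≤ y) (n : ℕ) :
    b ^ n < y ↔ n * Real.log b < logPlus y := by
  have hn : 0 ≤ n * Real.log b := by positivity [Real.log_pos hb]
  rw [logPlus, lt_max_iff, or_iff_left hn.not_gt, ← Real.log_pow]
  rcases hy.eq_or_lt with rfl | hy
  · simpa [(pow_pos (zero_lt_one.trans hb) n).not_gt] using hn
  · exact (Real.log_lt_log_iff (by positivity) hy).symm

theorem lintegral_logPlus_lt_top_iff_tsum_measure_lt_top [IsFiniteMeasure μ] {Y : Ω → ℝ}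
    (hY : Measurable Y) (hY0 : 0 ≤ Y) {b : ℝ} (hb : 1 < b) :
    ∫⁻ ω, ENNReal.ofReal (logPlus (Y ω)) ∂μ < ∞ ↔ ∑' n : ℕ, μ {ω | b ^ n < Y ω} < ∞ := by
  have hlogb : 0 < Real.log b := Real.log_pos hb
  have hsets : ∀ n : ℕ, {ω | b ^ n < Y ω} = {ω | (n : ℝ) < logPlus (Y ω) / Real.log b} := by
    intro n
    ext ω
    rw [mem_ofPred_eq, mem_ofPred_eq, lt_div_iff₀ hlogb,
      pow_lt_iff_mul_log_lt_logPlus hb (hY0 ω)]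
  have hmeas : Measurable fun ω => logPlus (Y ω) :=
    (Real.measurable_log.comp hY).max measurable_const
  simp_rw [hsets, ← lintegral_ofReal_lt_top_iff_tsum_measure_lt_top (hmeas.div_const _)
    (fun ω => div_nonneg (le_max_right _ _) hlogb.le), ENNReal.ofReal_div_of_pos hlogb,
    div_eq_mul_inv]
  rw [lintegral_mul_const' _ _ (ENNReal.inv_ne_top.2 (by simpa using hlogb))]
  simp [lt_top_iff_ne_top, ENNReal.mul_eq_top, hlogb]

end TailSums

section BorelCantelli

variable {Ω E : Type*} [MeasurableSpace Ω] [NormedAddCommGroup E] [MeasurableSpace E]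
  [OpensMeasurableSpace E] {μ : Measure Ω} {Z : ℕ → Ω → E} {b : ℝ}

theorem tsum_measure_pow_lt_norm_lt_top_iff_of_identDistrib [IsFiniteMeasure μ]
    (hZ : Measurable (Z 0)) (hident : ∀ j, IdentDistrib (Z j) (Z 0) μ μ) (hb : 1 < b) :
    ∑' j : ℕ, μ {ω | b ^ j < ‖Z j ω‖} < ∞ ↔
      ∫⁻ ω, ENNReal.ofReal (logPlus ‖Z 0 ω‖) ∂μ < ∞ := by
  have hsame : ∀ j, μ {ω | b ^ j < ‖Z j ω‖} = μ {ω | b ^ j < ‖Z 0 ω‖} := fun j =>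
    (hident j).measure_mem_eq (measurableSet_lt measurable_const measurable_norm)
  simp_rw [hsame]
  exact (lintegral_logPlus_lt_top_iff_tsum_measure_lt_top hZ.norm (fun ω => norm_nonneg _) hb).symm

theorem ae_eventually_norm_le_pow_of_lintegral_logPlus_lt_top [IsFiniteMeasure μ]
    (hZ : Measurable (Z 0)) (hident : ∀ j, IdentDistrib (Z j) (Z 0) μ μ) (hb : 1 < b)
    (hlog : ∫⁻ ω, ENNReal.ofReal (logPlus ‖Z 0 ω‖) ∂μ < ∞) :
    ∀ᵐ ω ∂μ, ∀ᶠ j in atTop, ‖Z j ω‖ ≤ b ^ j := by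
  have hsum := (tsum_measure_pow_lt_norm_lt_top_iff_of_identDistrib hZ hident hb).2 hlog
  filter_upwards [ae_eventually_notMem hsum.ne] with ω hω
  filter_upwards [hω] with j hj using not_lt.1 hj

theorem ae_frequently_pow_lt_norm_of_lintegral_logPlus_eq_top [IsProbabilityMeasure μ]
    (hmeas : ∀ j, Measurable (Z j)) (hindep : iIndepFun Z μ)
    (hident : ∀ j, IdentDistrib (Z j) (Z 0) μ μ) (hb : 1 < b)
    (hlog : ∫⁻ ω, ENNReal.ofReal (logPlus ‖Z 0 ω‖) ∂μ = ∞) :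
    ∀ᵐ ω ∂μ, ∃ᶠ j in atTop, b ^ j < ‖Z j ω‖ := by
  set s : ℕ → Set Ω := fun j => {ω | b ^ j < ‖Z j ω‖}
  have hsm : ∀ j, MeasurableSet (s j) := fun j =>
    measurableSet_lt measurable_const (hmeas j).norm
  have hsum : ∑' j, μ (s j) = ∞ := by
    simpa [hlog] using (tsum_measure_pow_lt_norm_lt_top_iff_of_identDistrib (hmeas 0) hident hb).not
  have hind : iIndepSet s μ := (iIndepSet_iff_meas_biInter hsm).2 fun S =>
    hindep.meas_biInter fun i _ => ⟨_, measurableSet_lt measurable_const measurable_norm, rfl⟩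
  have hlimsup : ∀ᵐ ω ∂μ, ω ∈ limsup s atTop := by
    rw [ae_mem_iff_measure_eq (MeasurableSet.measurableSet_limsup hsm).nullMeasurableSet,
      measure_univ]
    exact measure_limsup_eq_one hsm hind hsum
  filter_upwards [hlimsup] with ω hω using mem_limsup_iff_frequently_mem.1 hω

end BorelCantelli

section Series

variable {d : ℕ} {Ω : Type*} [MeasurableSpace Ω] {μ : Measure Ω}
  {Z : ℕ → Ω → EuclideanSpace ℝ (Fin d)} {P : Matrix (Fin d) (Fin d) ℝ}

theorem ae_summable_norm_mApp_pow_of_lintegral_logPlus_lt_top [IsFiniteMeasure μ]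
    (hZ : Measurable (Z 0)) (hident : ∀ j, IdentDistrib (Z j) (Z 0) μ μ) (hP : specRad P < 1)
    (hlog : ∫⁻ ω, ENNReal.ofReal (logPlus ‖Z 0 ω‖) ∂μ < ∞) :
    ∀ᵐ ω ∂μ, Summable fun j : ℕ => ‖mApp (P ^ j) (Z j ω)‖ := by
  obtain ⟨r, hr0, hr1, hPr⟩ := exists_lt_one_eventually_norm_mApp_pow_le hP
  obtain ⟨b, hb1, hbr⟩ := exists_between ((one_lt_inv₀ hr0).2 hr1)
  have hrb : r * b < 1 := by simpa [hr0.ne'] using mul_lt_mul_of_pos_left hbr hr0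
  filter_upwards [ae_eventually_norm_le_pow_of_lintegral_logPlus_lt_top hZ hident hb1 hlog]
    with ω hω
  refine (summable_geometric_of_lt_one (by positivity) hrb).of_norm_bounded_eventually_nat ?_
  filter_upwards [hω, hPr] with j hZj hPj
  calc ‖‖mApp (P ^ j) (Z j ω)‖‖ = ‖mApp (P ^ j) (Z j ω)‖ := norm_norm _
    _ ≤ r ^ j * ‖Z j ω‖ := hPj _
    _ ≤ r ^ j * b ^ j := by gcongr
    _ = (r * b) ^ j := (mul_pow _ _ _).symm

theorem lintegral_logPlus_lt_top_of_ae_tendsto_mApp_pow [IsProbabilityMeasure μ]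
    (hmeas : ∀ j, Measurable (Z j)) (hindep : iIndepFun Z μ)
    (hident : ∀ j, IdentDistrib (Z j) (Z 0) μ μ) (hP : IsUnit P)
    (h : ∀ᵐ ω ∂μ, Tendsto (fun j : ℕ => mApp (P ^ j) (Z j ω)) atTop (nhds 0)) :
    ∫⁻ ω, ENNReal.ofReal (logPlus ‖Z 0 ω‖) ∂μ < ∞ := by
  obtain ⟨b, hb1, hPb⟩ := exists_one_lt_forall_norm_le_pow_mul_norm_mApp_pow hP
  refine lt_top_iff_ne_top.2 fun hlog => ?_
  obtain ⟨ω, hfreq, hlim⟩ := ((ae_frequently_pow_lt_norm_of_lintegral_logPlus_eq_top hmeas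
    hindep hident hb1 hlog).and h).exists
  obtain ⟨j, hZj, hPZj⟩ := (hfreq.and_eventually
    ((tendsto_zero_iff_norm_tendsto_zero.1 hlim).eventually_lt_const zero_lt_one)).exists
  exact (hZj.trans_le (hPb j _)).not_ge
    (mul_le_of_le_one_right (pow_pos (zero_lt_one.trans hb1) j).le hPZj.le)

end Series

theorem tfae_log_moment_summable {d : ℕ} {Ω : Type*} [MeasurableSpace Ω]
    (μ : Measure Ω) [IsProbabilityMeasure μ]
    (Z : ℕ → Ω → EuclideanSpace ℝ (Fin d)) (hmeas : ∀ j, Measurable (Z j))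
    (hindep : iIndepFun Z μ)
    (hident : ∀ j, IdentDistrib (Z j) (Z 0) μ μ)
    (P : Matrix (Fin d) (Fin d) ℝ) (hPinv : IsUnit P) (hP : specRad P < 1) :
    List.TFAE
      [ ∫⁻ ω, ENNReal.ofReal (logPlus ‖Z 0 ω‖) ∂μ < ⊤,
        ∀ᵐ ω ∂μ, Summable fun j : ℕ => ‖mApp (P ^ j) (Z j ω)‖,
        ∀ᵐ ω ∂μ, ∃ L : EuclideanSpace ℝ (Fin d),
          Filter.Tendsto (fun n : ℕ => ∑ j ∈ Finset.range n, mApp (P ^ j) (Z j ω))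
            atTop (nhds L),
        ∀ᵐ ω ∂μ, Filter.Tendsto (fun j : ℕ => mApp (P ^ j) (Z j ω)) atTop (nhds 0) ] := by
  tfae_have 1 → 2 := ae_summable_norm_mApp_pow_of_lintegral_logPlus_lt_top (hmeas 0) hident hP
  tfae_have 2 → 3 := fun h => by
    filter_upwards [h] with ω hω using ⟨_, (Summable.of_norm hω).hasSum.tendsto_sum_nat⟩
  tfae_have 3 → 4 := fun h => by
    filter_upwards [h] with ω ⟨L, hL⟩ using tendsto_zero_of_tendsto_sum_range hL
  tfae_have 4 → 1 := lintegral_logPlus_lt_top_of_ae_tendsto_mApp_pow hmeas hindep hident hPinv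
  tfae_finish
end
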